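/- For all integers n ≥ 1 and j ≥ 1, the number of overpartitions λ of n whose smallest missing odd non-overlined part mex̄_{2,1}(λ) satisfies mex̄_{2,1}(λ) ≥ 2j+1 equals p̄(n − j²), via the bijection that removes the parts 1, 3, …, 2j−1 from λ. -/

import Mathlib

/-- An overpartition of `n`: non-overlined parts with multiplicities given by `count`,
overlined parts given by the finite set `over` (each value overlined at most once). -/
structure Overpartition (n : ℕ) where
  count : ℕ →₀ ℕ
  overlined : Finset ℕ
  count_zero : count 0 = 0
  zero_not_over : 0 ∉ overlined
  weight : (count.sum fun k m => k * m) + ∑ k ∈ overlined, k = n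

/-- The number of overpartitions of `n`. -/
noncomputable def pbar (n : ℕ) : ℕ := Nat.card (Overpartition n)

/-- `pbar` extended to the integers by `0` on negatives. -/
noncomputable def pbarZ (m : ℤ) : ℕ := if m < 0 then 0 else pbar m.toNat

/-- The smallest odd positive integer that is not a non-overlined part. -/
noncomputable def mex21 {n : ℕ} (π : Overpartition n) : ℕ := sInf {m : ℕ | m % 2 = 1 ∧ π.count m = 0}

/-- The number of overpartitions `π` of `n` with `mex21 π ≥ 2k+1` and
`mex21 π ≡ 2k+1 (mod 4)`. -/
noncomputable def op21 (n k : ℕ) : ℕ :=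
  Nat.card {π : Overpartition n // 2 * k + 1 ≤ mex21 π ∧ mex21 π % 4 = (2 * k + 1) % 4}

/-- Total number of occurrences of the value `p` (overlined or not) in `π`. -/
noncomputable def multTotal {n : ℕ} (π : Overpartition n) (p : ℕ) : ℕ :=
  π.count p + if p ∈ π.overlined then 1 else 0

/- ### Auxiliary material -/

theorem Overpartition.ext' {n : ℕ} {π ρ : Overpartition n}
    (h1 : π.count = ρ.count) (h2 : π.overlined = ρ.overlined) : π = ρ := by
  cases π; cases ρ; simp_all

/-- The finitely supported function with one copy of each of `1, 3, …, 2j-1`. -/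
noncomputable def oddF (j : ℕ) : ℕ →₀ ℕ :=
  ∑ i ∈ Finset.range j, Finsupp.single (2 * i + 1) 1

theorem oddF_apply (j m : ℕ) :
    oddF j m = if m % 2 = 1 ∧ m < 2 * j then 1 else 0 := by
  rw [oddF, Finsupp.finset_sum_apply]
  by_cases h : m % 2 = 1 ∧ m < 2 * j
  · rw [if_pos h]
    obtain ⟨h1, h2⟩ := h
    have hm : m = 2 * (m / 2) + 1 := by omega
    rw [Finset.sum_eq_single (m / 2)]
    · rw [Finsupp.single_apply, if_pos (by omega)]
    · intro b _ hb
      rw [Finsupp.single_apply, if_neg (by omega)]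
    · intro hb
      simp only [Finset.mem_range] at hb
      omega
  · rw [if_neg h]
    apply Finset.sum_eq_zero
    intro i hi
    simp only [Finset.mem_range] at hi
    rw [Finsupp.single_apply, if_neg (by omega)]

theorem oddF_sum (j : ℕ) : ((oddF j).sum fun k m => k * m) = j ^ 2 := by
  induction j with
  | zero => simp [oddF]
  | succ j ih =>
    have : oddF (j + 1) = oddF j + Finsupp.single (2 * j + 1) 1 := by
      rw [oddF, oddF, Finset.sum_range_succ]
    rw [this, Finsupp.sum_add_index' (by simp) (fun a b c => Nat.mul_add a b c), ih,
      Finsupp.sum_single_index (by simp)]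
    ring

/-- Characterization of the condition `2j+1 ≤ mex21 π`. -/
theorem mex21_ge_iff {n : ℕ} (π : Overpartition n) (j : ℕ) :
    2 * j + 1 ≤ mex21 π ↔ ∀ i < j, π.count (2 * i + 1) ≠ 0 := by
  constructor
  · intro h i hi hc
    have : mex21 π ≤ 2 * i + 1 := Nat.sInf_le ⟨by omega, hc⟩
    omega
  · intro h
    have hne : {m : ℕ | m % 2 = 1 ∧ π.count m = 0}.Nonempty := by
      refine ⟨2 * (π.count.support.sup id) + 1, by omega, ?_⟩
      by_contra hc
      have hmem : 2 * (π.count.support.sup id) + 1 ∈ π.count.support :=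
        Finsupp.mem_support_iff.mpr hc
      have := Finset.le_sup (f := id) hmem
      simp only [id] at this
      omega
    have hm := Nat.sInf_mem hne
    obtain ⟨h1, h2⟩ := hm
    by_contra hc
    push_neg at hc
    have hi : mex21 π = 2 * (mex21 π / 2) + 1 := by
      have := h1; unfold mex21 at *; omega
    exact h (mex21 π / 2) (by unfold mex21 at *; omega) (hi ▸ h2)

theorem card_mex21_ge_eq_pbar (n j : ℕ) (hn : 1 ≤ n) (hj : 1 ≤ j) :
    Nat.card {lam : Overpartition n // 2 * j + 1 ≤ mex21 lam} =
      pbarZ ((n : ℤ) - (j : ℤ) ^ 2) := by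
  have hsum0 : ∀ a : ℕ, (fun k m => k * m) a 0 = 0 := by intro a; simp
  have hsumadd : ∀ (a b c : ℕ), a * (b + c) = a * b + a * c := fun a b c => Nat.mul_add a b c
  -- weight lower bound for partitions satisfying the condition
  have key : ∀ lam : Overpartition n, 2 * j + 1 ≤ mex21 lam →
      oddF j ≤ lam.count ∧ j ^ 2 ≤ n := by
    intro lam hlam
    have hcnt := (mex21_ge_iff lam j).mp hlam
    have hle : oddF j ≤ lam.count := by
      rw [Finsupp.le_def]
      intro m
      rw [oddF_apply]
      by_cases h : m % 2 = 1 ∧ m < 2 * j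
      · rw [if_pos h]
        have hm : m = 2 * (m / 2) + 1 := by omega
        have := hcnt (m / 2) (by omega)
        rw [hm]
        omega
      · rw [if_neg h]; omega
    refine ⟨hle, ?_⟩
    have hdec : lam.count = (lam.count - oddF j) + oddF j := (tsub_add_cancel_of_le hle).symm
    have hw := lam.weight
    rw [hdec, Finsupp.sum_add_index' hsum0 hsumadd, oddF_sum] at hw
    omega
  by_cases hjn : j ^ 2 ≤ n
  · -- build the bijection
    have htoNat : ((n : ℤ) - (j : ℤ) ^ 2).toNat = n - j ^ 2 := by
      have : (j : ℤ) ^ 2 = ((j ^ 2 : ℕ) : ℤ) := by push_cast; ring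
      rw [this]; omega
    have hneg : ¬ ((n : ℤ) - (j : ℤ) ^ 2 < 0) := by
      have : (j : ℤ) ^ 2 = ((j ^ 2 : ℕ) : ℤ) := by push_cast; ring
      rw [this]; omega
    rw [pbarZ, if_neg hneg, htoNat, pbar]
    apply Nat.card_eq_of_bijective _ (Equiv.bijective _)
    refine
      { toFun := fun p => {
          count := p.1.count - oddF j
          overlined := p.1.overlined
          count_zero := by
            rw [Finsupp.tsub_apply, p.1.count_zero]
            simp
          zero_not_over := p.1.zero_not_over
          weight := ?_ }
        invFun := fun μ => ⟨{
          count := μ.count + oddF j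
          overlined := μ.overlined
          count_zero := by
            rw [Finsupp.add_apply, μ.count_zero, oddF_apply]
            simp
          zero_not_over := μ.zero_not_over
          weight := ?_ }, ?_⟩
        left_inv := ?_
        right_inv := ?_ }
    · -- weight of forward image
      obtain ⟨hle, -⟩ := key p.1 p.2
      have hdec : p.1.count = (p.1.count - oddF j) + oddF j := (tsub_add_cancel_of_le hle).symm
      have hw := p.1.weight
      rw [hdec, Finsupp.sum_add_index' hsum0 hsumadd, oddF_sum] at hw
      have hw' : ((p.1.count - oddF j).sum fun k m => k * m) + j ^ 2 +
          ∑ k ∈ p.1.overlined, k = n := hw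
      omega
    · -- weight of backward image
      have hw := μ.weight
      rw [Finsupp.sum_add_index' hsum0 hsumadd, oddF_sum]
      have hw' : (μ.count.sum fun k m => k * m) = μ.count.sum HMul.hMul := rfl
      omega
    · -- condition for backward image
      rw [mex21_ge_iff]
      intro i hi
      simp only [Finsupp.add_apply, oddF_apply]
      rw [if_pos ⟨by omega, by omega⟩]
      omega
    · intro p
      obtain ⟨hle, -⟩ := key p.1 p.2
      apply Subtype.ext
      apply Overpartition.ext'
      · exact tsub_add_cancel_of_le hle
      · rfl
    · intro μ
      apply Overpartition.ext'
      · exact add_tsub_cancel_right _ _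
      · rfl
  · -- empty case
    have hneg : (n : ℤ) - (j : ℤ) ^ 2 < 0 := by
      have : (j : ℤ) ^ 2 = ((j ^ 2 : ℕ) : ℤ) := by push_cast; ring
      rw [this]; omega
    rw [pbarZ, if_pos hneg]
    have : IsEmpty {lam : Overpartition n // 2 * j + 1 ≤ mex21 lam} := by
      refine ⟨fun p => ?_⟩
      obtain ⟨-, h2⟩ := key p.1 p.2
      omega
    exact Nat.card_of_isEmpty
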